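/- Fix positive integers N, K, N_t; channel vectors h_{m,i,j} ∈ ℂ^{N_t}; positive semidefinite matrices Q_{i,k} and powers q_{i,k} > 0; δ ∈ [0,1]; noise power σ² > 0; SINR targets Γ_{i,j} > 0; and functions η, ν : ℝ → ℝ that are nonnegative and nondecreasing on [0,∞). Then the infimum of β over all (β, (W_i)_{i=1}^N) such that SINR_{i,j} ≥ Γ_{i,j} for all i, j and Re tr(W_iᴴ Q_{i,k} W_i) + Σ_n δ Re tr(Q_{i,k} T_n) η(‖T_n W_i‖_F)² ≤ β q_{i,k} for all i, k, equals the infimum of β over all tuples (β, (W_i), (t_{i,n}), (r_{i,j})) satisfying the reformulated constraints: t_{i,n} ≥ 0, r_{i,j} ≥ 0, Im(h_{i,i,j}ᴴ w_{i,j}) = 0, Re tr(W_iᴴ Q_{i,k} W_i) + Σ_n δ Re tr(Q_{i,k} T_n) t_{i,n}² ≤ β q_{i,k}, sqrt(Σ_m ‖h_{m,i,j}ᴴ W_m‖_F² + Σ_{m,n} |(h_{m,i,j})_n|² t_{m,n}² + r_{i,j}² + σ²) ≤ sqrt(1 + 1/Γ_{i,j}) · Re(h_{i,i,j}ᴴ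 w_{i,j}), η(‖T_n W_m‖_F) ≤ t_{m,n}, and ν(sqrt(Σ_m ‖h_{m,i,j}ᴴ W_m‖_F²)) ≤ r_{i,j}. (Theorem 1, equivalence part.) -/

import Mathlib

open scoped ComplexConjugate

/-- Conjugate inner product `hᴴ x = ∑ₙ conj(hₙ) xₙ`. -/
noncomputable def dotc {Nt : ℕ} (h x : Fin Nt → ℂ) : ℂ :=
  ∑ n, conj (h n) * x n

/-- `‖Tₙ W‖_F = √(∑ₖ |Wₙₖ|²)`: the transmit magnitude at antenna `n`. -/
noncomputable def rowNorm {Nt K : ℕ} (W : Matrix (Fin Nt) (Fin K) ℂ) (n : Fin Nt) : ℝ :=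
  Real.sqrt (∑ k, ‖W n k‖ ^ 2)

/-- Total received signal power `∑ₘ ‖h_{m,i,j}ᴴ W_m‖_F²` at user `j` of cell `i`. -/
noncomputable def sigPow {N K Nt : ℕ} (h : Fin N → Fin N → Fin K → Fin Nt → ℂ)
    (W : Fin N → Matrix (Fin Nt) (Fin K) ℂ) (i : Fin N) (j : Fin K) : ℝ :=
  ∑ m, ∑ k, ‖dotc (h m i j) (fun n => W m n k)‖ ^ 2

/-- The SINR of user `j` in cell `i` under transceiver impairments, with
transmitter distortion function `η`, receiver distortion function `ν`, and
thermal noise power `σ2`. -/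
noncomputable def SINR {N K Nt : ℕ} (η ν : ℝ → ℝ) (σ2 : ℝ)
    (h : Fin N → Fin N → Fin K → Fin Nt → ℂ)
    (W : Fin N → Matrix (Fin Nt) (Fin K) ℂ) (i : Fin N) (j : Fin K) : ℝ :=
  ‖dotc (h i i j) (fun n => W i n j)‖ ^ 2 /
    ((∑ l ∈ Finset.univ.filter (fun l => l ≠ j),
        ‖dotc (h i i j) (fun n => W i n l)‖ ^ 2)
      + (∑ m ∈ Finset.univ.filter (fun m => m ≠ i),
          ∑ k, ‖dotc (h m i j) (fun n => W m n k)‖ ^ 2)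
      + (∑ m, ∑ n, ‖h m i j n‖ ^ 2 * η (rowNorm (W m) n) ^ 2)
      + (σ2 + ν (Real.sqrt (sigPow h W i j)) ^ 2))

open Matrix ComplexOrder

/-!
The two feasible sets have the same projection onto `β`. Since the received power is the desired
power plus all interference, `SINR ≥ Γ` says that received power, distortion and noise together
are at most `(1 + 1/Γ) |h_{i,i,j}ᴴ w_{i,j}|²`. Rotating each beam by a unit phase changes no power,
row norm or trace but makes the desired amplitude real and nonnegative; the SINR constraint is then
the cone constraint with `t = η(‖T_n W‖_F)` and `r = ν(…)`. Conversely, since `η, ν ≥ 0`,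
enlarging them to `t, r` only tightens the cone and power constraints (the weights
`δ (Q_{i,k})_{nn}` are nonnegative as `Q_{i,k}` is PSD).
-/

open Complex

lemma exp_neg_arg_mul_I_mul_self (c : ℂ) : exp (↑(-arg c) * I) * c = ‖c‖ := by
  conv_lhs => rw [← norm_mul_exp_arg_mul_I c]
  rw [mul_left_comm, ← exp_add]
  push_cast
  simp

lemma Matrix.diagonal_mul_conjTranspose_diagonal {K : Type*} [Fintype K] [DecidableEq K]
    {e : K → ℂ} (he : ∀ k, ‖e k‖ = 1) : diagonal e * (diagonal e)ᴴ = 1 := by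
  rw [diagonal_conjTranspose, diagonal_mul_diagonal, ← diagonal_one]
  congr 1
  ext k
  simp [Complex.mul_conj, Complex.normSq_eq_norm_sq, he]

lemma Matrix.trace_conjTranspose_mul_mul_of_mul_conjTranspose_eq_one {m n : Type*}
    [Fintype m] [Fintype n] [DecidableEq n] (A : Matrix m n ℂ) (Q : Matrix m m ℂ) {U : Matrix n n ℂ}
    (hU : U * Uᴴ = 1) : trace ((A * U)ᴴ * Q * (A * U)) = trace (Aᴴ * Q * A) := by
  rw [conjTranspose_mul,
    show Uᴴ * Aᴴ * Q * (A * U) = Uᴴ * (Aᴴ * Q * A * U) by simp only [Matrix.mul_assoc],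
    trace_mul_comm, Matrix.mul_assoc, hU, Matrix.mul_one]

lemma dotc_mul_diagonal {Nt K : ℕ} (h : Fin Nt → ℂ) (W : Matrix (Fin Nt) (Fin K) ℂ)
    (e : Fin K → ℂ) (k : Fin K) :
    dotc h (fun n => (W * diagonal e) n k) = e k * dotc h (fun n => W n k) := by
  simp only [dotc, mul_diagonal, Finset.mul_sum]
  exact Finset.sum_congr rfl fun n _ => by ring

lemma rowNorm_mul_diagonal {Nt K : ℕ} (W : Matrix (Fin Nt) (Fin K) ℂ) {e : Fin K → ℂ}
    (he : ∀ k, ‖e k‖ = 1) (n : Fin Nt) : rowNorm (W * diagonal e) n = rowNorm W n := by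
  simp [rowNorm, mul_diagonal, he]

section PhaseAlignment

variable {N K Nt : ℕ} (h : Fin N → Fin N → Fin K → Fin Nt → ℂ)
  (W : Fin N → Matrix (Fin Nt) (Fin K) ℂ)

noncomputable def phaseAlign (i : Fin N) : Matrix (Fin Nt) (Fin K) ℂ :=
  W i * diagonal fun k => exp (↑(-arg (dotc (h i i k) fun n => W i n k)) * I)

lemma norm_phaseAlign_phase (i : Fin N) (k : Fin K) :
    ‖exp (↑(-arg (dotc (h i i k) fun n => W i n k)) * I)‖ = 1 :=
  norm_exp_ofReal_mul_I _

lemma dotc_phaseAlign_self (i : Fin N) (j : Fin K) :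
    dotc (h i i j) (fun n => phaseAlign h W i n j) = ‖dotc (h i i j) fun n => W i n j‖ := by
  rw [phaseAlign, dotc_mul_diagonal, exp_neg_arg_mul_I_mul_self]

lemma rowNorm_phaseAlign (i : Fin N) (n : Fin Nt) :
    rowNorm (phaseAlign h W i) n = rowNorm (W i) n :=
  rowNorm_mul_diagonal _ (norm_phaseAlign_phase h W i) n

lemma sigPow_phaseAlign (i : Fin N) (j : Fin K) :
    sigPow h (phaseAlign h W) i j = sigPow h W i j := by
  simp only [sigPow, phaseAlign, dotc_mul_diagonal, norm_mul, norm_phaseAlign_phase, one_mul]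

lemma trace_phaseAlign (i : Fin N) (Q : Matrix (Fin Nt) (Fin Nt) ℂ) :
    trace ((phaseAlign h W i)ᴴ * Q * phaseAlign h W i) = trace ((W i)ᴴ * Q * W i) :=
  trace_conjTranspose_mul_mul_of_mul_conjTranspose_eq_one _ _
    (diagonal_mul_conjTranspose_diagonal (norm_phaseAlign_phase h W i))

end PhaseAlignment

lemma le_div_iff_add_le_one_add_one_div_mul {Γ a d : ℝ} (hΓ : 0 < Γ) (hd : 0 < d) :
    Γ ≤ a / d ↔ a + d ≤ (1 + 1 / Γ) * a := by
  rw [le_div_iff₀ hd, add_mul, one_mul, add_le_add_iff_left, one_div_mul_eq_div,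
    le_div_iff₀ hΓ, mul_comm]

lemma sigPow_eq_add {N K Nt : ℕ} (h : Fin N → Fin N → Fin K → Fin Nt → ℂ)
    (W : Fin N → Matrix (Fin Nt) (Fin K) ℂ) (i : Fin N) (j : Fin K) :
    sigPow h W i j = ‖dotc (h i i j) (fun n => W i n j)‖ ^ 2
      + (∑ l ∈ Finset.univ.filter (fun l => l ≠ j),
          ‖dotc (h i i j) (fun n => W i n l)‖ ^ 2)
      + (∑ m ∈ Finset.univ.filter (fun m => m ≠ i),
          ∑ k, ‖dotc (h m i j) (fun n => W m n k)‖ ^ 2) := by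
  rw [sigPow, Finset.filter_ne', Finset.filter_ne', ← Finset.sum_erase_add _ _ (Finset.mem_univ i),
    ← Finset.sum_erase_add _ _ (Finset.mem_univ j)]
  ring

lemma le_SINR_iff {N K Nt : ℕ} (η ν : ℝ → ℝ) {σ2 Γ : ℝ} (hσ : 0 < σ2) (hΓ : 0 < Γ)
    (h : Fin N → Fin N → Fin K → Fin Nt → ℂ) (W : Fin N → Matrix (Fin Nt) (Fin K) ℂ)
    (i : Fin N) (j : Fin K) :
    Γ ≤ SINR η ν σ2 h W i j ↔
      sigPow h W i j + (∑ m, ∑ n, ‖h m i j n‖ ^ 2 * η (rowNorm (W m) n) ^ 2)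
          + ν (√(sigPow h W i j)) ^ 2 + σ2
        ≤ (1 + 1 / Γ) * ‖dotc (h i i j) (fun n => W i n j)‖ ^ 2 := by
  rw [SINR, le_div_iff_add_le_one_add_one_div_mul hΓ (by positivity)]
  have := sigPow_eq_add h W i j
  constructor <;> intro <;> linarith

lemma re_trace_mul_single_nonneg {n : Type*} [Fintype n] [DecidableEq n]
    {Q : Matrix n n ℂ} (hQ : Q.PosSemidef) (k : n) :
    0 ≤ (trace (Q * single k k (1 : ℂ))).re := by
  simpa [trace_mul_single] using (Complex.nonneg_iff.1 hQ.diag_nonneg).1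

theorem stmt_7_general {N K Nt : ℕ}
    (h : Fin N → Fin N → Fin K → Fin Nt → ℂ)
    (L : Fin N → ℕ)
    (Q : (i : Fin N) → Fin (L i) → Matrix (Fin Nt) (Fin Nt) ℂ)
    (hQ : ∀ i k, (Q i k).PosSemidef)
    (q : (i : Fin N) → Fin (L i) → ℝ)
    (δ : ℝ) (hδ : δ ∈ Set.Icc (0 : ℝ) 1)
    (σ2 : ℝ) (hσ : 0 < σ2)
    (Γ : Fin N → Fin K → ℝ) (hΓ : ∀ i j, 0 < Γ i j)
    (η ν : ℝ → ℝ)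
    (hη0 : ∀ x ∈ Set.Ici (0 : ℝ), 0 ≤ η x)
    (hν0 : ∀ x ∈ Set.Ici (0 : ℝ), 0 ≤ ν x) :
    sInf {β : ℝ | ∃ W : Fin N → Matrix (Fin Nt) (Fin K) ℂ,
        (∀ i j, Γ i j ≤ SINR η ν σ2 h W i j) ∧
        (∀ i k, (Matrix.trace ((W i)ᴴ * Q i k * W i)).re
            + ∑ n, δ * (Matrix.trace (Q i k * Matrix.single n n (1 : ℂ))).re
                * η (rowNorm (W i) n) ^ 2
          ≤ β * q i k)} =
    sInf {β : ℝ | ∃ (W : Fin N → Matrix (Fin Nt) (Fin K) ℂ)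
        (t : Fin N → Fin Nt → ℝ) (r : Fin N → Fin K → ℝ),
        (∀ i n, 0 ≤ t i n) ∧ (∀ i j, 0 ≤ r i j) ∧
        (∀ i j, (dotc (h i i j) (fun n => W i n j)).im = 0) ∧
        (∀ i k, (Matrix.trace ((W i)ᴴ * Q i k * W i)).re
            + ∑ n, δ * (Matrix.trace (Q i k * Matrix.single n n (1 : ℂ))).re
                * t i n ^ 2
          ≤ β * q i k) ∧
        (∀ i j, Real.sqrt (sigPow h W i j
              + (∑ m, ∑ n, ‖h m i j n‖ ^ 2 * t m n ^ 2)
              + r i j ^ 2 + σ2)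
          ≤ Real.sqrt (1 + 1 / Γ i j) * (dotc (h i i j) (fun n => W i n j)).re) ∧
        (∀ m n, η (rowNorm (W m) n) ≤ t m n) ∧
        (∀ i j, ν (Real.sqrt (sigPow h W i j)) ≤ r i j)} := by
  have hη : ∀ W : Fin N → Matrix (Fin Nt) (Fin K) ℂ, ∀ m n, 0 ≤ η (rowNorm (W m) n) :=
    fun _ _ _ => hη0 _ (Real.sqrt_nonneg _)
  have hΓ' : ∀ i j, 0 ≤ 1 + 1 / Γ i j := fun i j => by have := hΓ i j; positivity
  congr 1
  ext β
  constructor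
  · rintro ⟨W, hSINR, hpow⟩
    refine ⟨phaseAlign h W, fun m n => η (rowNorm (W m) n), fun i j => ν √(sigPow h W i j),
      hη W, fun i j => hν0 _ (Real.sqrt_nonneg _), fun i j => by simp [dotc_phaseAlign_self],
      fun i k => by simpa only [trace_phaseAlign, rowNorm_phaseAlign] using hpow i k,
      fun i j => ?_, fun m n => by rw [rowNorm_phaseAlign],
      fun i j => by rw [sigPow_phaseAlign]⟩
    rw [sigPow_phaseAlign, dotc_phaseAlign_self, ofReal_re,
      ← Real.sqrt_sq (norm_nonneg _), ← Real.sqrt_mul (hΓ' i j)]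
    exact Real.sqrt_le_sqrt ((le_SINR_iff η ν hσ (hΓ i j) h W i j).1 (hSINR i j))
  · rintro ⟨W, t, r, -, -, hreal, hpow, hcone, hηt, hνr⟩
    refine ⟨W, fun i j => ?_, fun i k => (hpow i k).trans' ?_⟩
    · obtain ⟨-, hsq⟩ := Real.sqrt_le_iff.1 (hcone i j)
      rw [mul_pow, Real.sq_sqrt (hΓ' i j)] at hsq
      rw [le_SINR_iff η ν hσ (hΓ i j), ← abs_re_eq_norm.2 (hreal i j), sq_abs]
      refine le_trans ?_ hsq
      gcongr with m _ n _
      · exact hη W m n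
      · exact hηt m n
      · exact hν0 _ (Real.sqrt_nonneg _)
      · exact hνr i j
    · gcongr with n
      · exact mul_nonneg hδ.1 (re_trace_mul_single_nonneg (hQ i k) n)
      · exact hη W i n
      · exact hηt i n

/-- Theorem 1 (equivalence part): the optimal power-scaling value of the QoS
problem (P1) — the infimum of `β` subject to the SINR constraints
`SINR_{i,j} ≥ Γ_{i,j}` and the power constraints
`Re tr(W_iᴴ Q_{i,k} W_i) + ∑_n δ Re tr(Q_{i,k} T_n) η(‖T_n W_i‖_F)² ≤ β q_{i,k}` —
coincides with the infimum of `β` over the convex reformulation (7)–(10) in the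
auxiliary variables `t_{i,n}` (transmitter distortion bounds) and
`r_{i,j}` (receiver distortion bounds). -/
theorem stmt_7 {N K Nt : ℕ} (hN : 0 < N) (hK : 0 < K) (hNt : 0 < Nt)
    (h : Fin N → Fin N → Fin K → Fin Nt → ℂ)
    (L : Fin N → ℕ)
    (Q : (i : Fin N) → Fin (L i) → Matrix (Fin Nt) (Fin Nt) ℂ)
    (hQ : ∀ i k, (Q i k).PosSemidef)
    (q : (i : Fin N) → Fin (L i) → ℝ) (hq : ∀ i k, 0 < q i k)
    (δ : ℝ) (hδ : δ ∈ Set.Icc (0 : ℝ) 1)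
    (σ2 : ℝ) (hσ : 0 < σ2)
    (Γ : Fin N → Fin K → ℝ) (hΓ : ∀ i j, 0 < Γ i j)
    (η ν : ℝ → ℝ)
    (hη0 : ∀ x ∈ Set.Ici (0 : ℝ), 0 ≤ η x) (hηmono : MonotoneOn η (Set.Ici 0))
    (hν0 : ∀ x ∈ Set.Ici (0 : ℝ), 0 ≤ ν x) (hνmono : MonotoneOn ν (Set.Ici 0)) :
    sInf {β : ℝ | ∃ W : Fin N → Matrix (Fin Nt) (Fin K) ℂ,
        (∀ i j, Γ i j ≤ SINR η ν σ2 h W i j) ∧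
        (∀ i k, (Matrix.trace ((W i)ᴴ * Q i k * W i)).re
            + ∑ n, δ * (Matrix.trace (Q i k * Matrix.single n n (1 : ℂ))).re
                * η (rowNorm (W i) n) ^ 2
          ≤ β * q i k)} =
    sInf {β : ℝ | ∃ (W : Fin N → Matrix (Fin Nt) (Fin K) ℂ)
        (t : Fin N → Fin Nt → ℝ) (r : Fin N → Fin K → ℝ),
        (∀ i n, 0 ≤ t i n) ∧ (∀ i j, 0 ≤ r i j) ∧
        (∀ i j, (dotc (h i i j) (fun n => W i n j)).im = 0) ∧
        (∀ i k, (Matrix.trace ((W i)ᴴ * Q i k * W i)).re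
            + ∑ n, δ * (Matrix.trace (Q i k * Matrix.single n n (1 : ℂ))).re
                * t i n ^ 2
          ≤ β * q i k) ∧
        (∀ i j, Real.sqrt (sigPow h W i j
              + (∑ m, ∑ n, ‖h m i j n‖ ^ 2 * t m n ^ 2)
              + r i j ^ 2 + σ2)
          ≤ Real.sqrt (1 + 1 / Γ i j) * (dotc (h i i j) (fun n => W i n j)).re) ∧
        (∀ m n, η (rowNorm (W m) n) ≤ t m n) ∧
        (∀ i j, ν (Real.sqrt (sigPow h W i j)) ≤ r i j)} :=
  stmt_7_general h L Q hQ q δ hδ σ2 hσ Γ hΓ η ν hη0 hν0
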